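/- Lemma A.1: for any matrix X : Matrix (Fin n) (Fin n) ℂ and any Hermitian matrix R : Matrix (Fin n) (Fin n) ℂ, 2 * (Tr(Xᴴ * R * X * R)).re ≤ (Tr(√(Xᴴ * X) * R * √(Xᴴ * X) * R) + Tr(√(X * Xᴴ) * R * √(X * Xᴴ) * R)).re. -/

import Mathlib

/-!
The Hermitian dilation `Z = !![0, Xᴴ; X, 0]` satisfies `|Z| = !![√(XᴴX), 0; 0, √(XXᴴ)]`, so with
`R̃ = !![R, 0; 0, R]` the inequality reads `Re Tr(Z R̃ Z R̃) ≤ Re Tr(|Z| R̃ |Z| R̃)`. This holds for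
every Hermitian `Z`: with `Z = Z⁺ - Z⁻` and `|Z| = Z⁺ + Z⁻`, the difference of the two traces is
`4 Tr(Z⁺ R̃ Z⁻ R̃)`, and `Tr(A R B R) = Tr((S R) B (S R)ᴴ) ≥ 0` whenever `A = SᴴS` and `B ≥ 0`.
-/

open Matrix
open scoped ComplexOrder

noncomputable section

namespace Matrix

/-- The square root of a positive semidefinite matrix, as defined in the older Mathlib
(`Matrix.PosSemidef.sqrt`, since removed). -/
noncomputable def PosSemidef.sqrt {n 𝕜 : Type*} [Fintype n] [RCLike 𝕜] [DecidableEq n]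
    {A : Matrix n n 𝕜} (hA : A.PosSemidef) : Matrix n n 𝕜 :=
  (hA.1.eigenvectorUnitary : Matrix n n 𝕜) * diagonal ((↑) ∘ Real.sqrt ∘ hA.1.eigenvalues) *
    (star hA.1.eigenvectorUnitary : Matrix n n 𝕜)

open scoped MatrixOrder

theorem trace_fromBlocks {m n α : Type*} [Fintype m] [Fintype n] [AddCommMonoid α]
    (A : Matrix n n α) (B : Matrix n m α) (C : Matrix m n α) (D : Matrix m m α) :
    trace (fromBlocks A B C D) = trace A + trace D := by
  simp [trace, Fintype.sum_sum_type]

variable {m n 𝕜 : Type*} [Fintype m] [Fintype n] [RCLike 𝕜] [DecidableEq m] [DecidableEq n]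

theorem PosSemidef.sqrt_eq_cfcSqrt {A : Matrix n n 𝕜} (hA : A.PosSemidef) :
    hA.sqrt = CFC.sqrt A := by
  rw [CFC.sqrt_eq_cfc, cfc_nnreal_eq_real _ A, hA.1.cfc_eq]
  simp [IsHermitian.cfc, PosSemidef.sqrt, Function.comp_def,
    max_eq_left (hA.eigenvalues_nonneg _)]

theorem trace_mul_mul_mul_nonneg {A B R : Matrix n n 𝕜} (hA : 0 ≤ A) (hB : 0 ≤ B)
    (hR : R.IsHermitian) : 0 ≤ trace (A * R * B * R) := by
  obtain ⟨S, rfl⟩ := CStarAlgebra.nonneg_iff_eq_star_mul_self.mp hA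
  have h : trace (star S * S * R * B * R) = trace ((S * R) * B * (S * R)ᴴ) := by
    rw [conjTranspose_mul, hR.eq, ← star_eq_conjTranspose]
    simp only [Matrix.mul_assoc]
    rw [trace_mul_comm]
    simp only [Matrix.mul_assoc]
  rw [h]
  exact (hB.posSemidef.mul_mul_conjTranspose_same _).trace_nonneg

theorem trace_mul_mul_mul_le_trace_abs {Z R : Matrix n n 𝕜} (hZ : Z.IsHermitian)
    (hR : R.IsHermitian) : trace (Z * R * Z * R) ≤ trace (CFC.abs Z * R * CFC.abs Z * R) := by
  have hP := CFC.posPart_nonneg Z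
  have hN := CFC.negPart_nonneg Z
  rw [← CFC.posPart_add_negPart Z hZ.isSelfAdjoint]
  have hZ' := CFC.posPart_sub_negPart Z hZ.isSelfAdjoint
  generalize Z⁺ = P at *
  generalize Z⁻ = N at *
  subst hZ'
  have hexpand : (P + N) * R * (P + N) * R =
      (P - N) * R * (P - N) * R + 2 • (P * R * N * R + N * R * P * R) := by
    noncomm_ring
  have hcyc : trace (N * R * P * R) = trace (P * R * N * R) := by
    rw [Matrix.mul_assoc (N * R), trace_mul_comm, ← Matrix.mul_assoc]
  have hcross := trace_mul_mul_mul_nonneg hP hN hR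
  rw [hexpand, trace_add, trace_smul, trace_add, hcyc]
  exact le_add_of_nonneg_right (nsmul_nonneg (add_nonneg hcross hcross) 2)

theorem fromBlocks_zero_zero_nonneg {A : Matrix n n 𝕜} {D : Matrix m m 𝕜} (hA : 0 ≤ A)
    (hD : 0 ≤ D) : 0 ≤ fromBlocks A 0 0 D := by
  obtain ⟨B, rfl⟩ := CStarAlgebra.nonneg_iff_eq_star_mul_self.mp hA
  obtain ⟨C, rfl⟩ := CStarAlgebra.nonneg_iff_eq_star_mul_self.mp hD
  have h : fromBlocks (star B * B) 0 0 (star C * C) =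
      star (fromBlocks B 0 0 C) * fromBlocks B 0 0 C := by
    simp [star_eq_conjTranspose, fromBlocks_conjTranspose, fromBlocks_multiply]
  rw [h]
  exact star_mul_self_nonneg _

theorem cfcSqrt_fromBlocks_zero_zero {A : Matrix n n 𝕜} {D : Matrix m m 𝕜} (hA : 0 ≤ A)
    (hD : 0 ≤ D) :
    CFC.sqrt (fromBlocks A 0 0 D) = fromBlocks (CFC.sqrt A) 0 0 (CFC.sqrt D) := by
  rw [CFC.sqrt_eq_iff _ _ (fromBlocks_zero_zero_nonneg hA hD)
    (fromBlocks_zero_zero_nonneg (CFC.sqrt_nonneg A) (CFC.sqrt_nonneg D))]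
  simp [fromBlocks_multiply, CFC.sqrt_mul_sqrt_self A hA, CFC.sqrt_mul_sqrt_self D hD]

theorem cfcAbs_fromBlocks_zero_conjTranspose (X : Matrix m n 𝕜) :
    CFC.abs (fromBlocks 0 Xᴴ X 0) = fromBlocks (CFC.sqrt (Xᴴ * X)) 0 0 (CFC.sqrt (X * Xᴴ)) := by
  rw [CFC.abs, star_eq_conjTranspose, fromBlocks_conjTranspose, fromBlocks_multiply]
  simpa using cfcSqrt_fromBlocks_zero_zero (posSemidef_conjTranspose_mul_self X).nonneg
    (posSemidef_self_mul_conjTranspose X).nonneg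

theorem two_mul_re_trace_conjTranspose_mul_mul_mul_le (X : Matrix m n 𝕜) {R : Matrix n n 𝕜}
    {S : Matrix m m 𝕜} (hR : R.IsHermitian) (hS : S.IsHermitian) :
    2 * RCLike.re (trace (Xᴴ * S * X * R)) ≤
      RCLike.re (trace (CFC.sqrt (Xᴴ * X) * R * CFC.sqrt (Xᴴ * X) * R) +
        trace (CFC.sqrt (X * Xᴴ) * S * CFC.sqrt (X * Xᴴ) * S)) := by
  have hZ : (fromBlocks 0 Xᴴ X 0).IsHermitian :=
    .fromBlocks isHermitian_zero (conjTranspose_conjTranspose X) isHermitian_zero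
  have hRS : (fromBlocks R 0 0 S).IsHermitian := .fromBlocks hR conjTranspose_zero hS
  have h := RCLike.re_le_re (trace_mul_mul_mul_le_trace_abs hZ hRS)
  rw [cfcAbs_fromBlocks_zero_conjTranspose] at h
  simp only [fromBlocks_multiply, zero_mul, Matrix.mul_zero, add_zero, zero_add, mul_zero,
    Matrix.zero_mul, trace_fromBlocks, map_add] at h
  have hconj : RCLike.re (trace (X * R * Xᴴ * S)) = RCLike.re (trace (Xᴴ * S * X * R)) := by
    have hadj : (X * R * Xᴴ * S)ᴴ = S * X * R * Xᴴ := by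
      simp only [conjTranspose_mul, hR.eq, hS.eq, conjTranspose_conjTranspose, Matrix.mul_assoc]
    rw [← RCLike.conj_re, ← RCLike.star_def, ← trace_conjTranspose, hadj, trace_mul_comm,
      ← Matrix.mul_assoc, ← Matrix.mul_assoc]
  rw [map_add]
  linarith

end Matrix

/-- **Lemma A.1**: for any matrix `X` and any Hermitian matrix `R`,
`2 Re Tr(Xᴴ R X R) ≤ Re (Tr(√(XᴴX) R √(XᴴX) R) + Tr(√(XXᴴ) R √(XXᴴ) R))`. -/
theorem lemma_A1 {n : ℕ} (X R : Matrix (Fin n) (Fin n) ℂ) (hR : R.IsHermitian) :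
    2 * (Matrix.trace (Xᴴ * R * X * R)).re ≤
      (Matrix.trace ((Matrix.posSemidef_conjTranspose_mul_self X).sqrt * R *
          (Matrix.posSemidef_conjTranspose_mul_self X).sqrt * R)
        + Matrix.trace ((Matrix.posSemidef_self_mul_conjTranspose X).sqrt * R *
          (Matrix.posSemidef_self_mul_conjTranspose X).sqrt * R)).re := by
  rw [PosSemidef.sqrt_eq_cfcSqrt, PosSemidef.sqrt_eq_cfcSqrt]
  exact two_mul_re_trace_conjTranspose_mul_mul_mul_le X hR hR
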